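/- arXiv:2105.08093 — 5 statements merged into one kernel-verified Lean document; each statement's English description precedes it below -/
import Mathlib

section
/- Let k ≥ 2, d ≥ 1 and 1 ≤ m < k be integers. For every matrix W ∈ ℝ^{k×d}, every x ∈ ℝ^d, every label y ∈ {1,…,k}, and every top-m set S for (W,x), the average hinge loss satisfies max(0, 1 − (Wx)_y + (1/m)·∑_{i∈S}(Wx)_i) ≥ 1 whenever y ∉ S; equivalently, max(0, 1 − (Wx)_y + (1/m)·∑_{i∈S}(Wx)_i) ≥ 𝟙{y ∉ S}. -/
/-- For any top-m set `S` for `(W, x)`, the average hinge loss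
`max(0, 1 − (Wx)_y + (1/m)·∑_{i∈S}(Wx)_i)` is at least the indicator `𝟙{y ∉ S}`. -/
theorem avg_hinge_loss_ge_indicator
    (k d m : ℕ) (hk : 2 ≤ k) (hd : 1 ≤ d) (hm1 : 1 ≤ m) (hmk : m < k)
    (W : Matrix (Fin k) (Fin d) ℝ) (x : Fin d → ℝ) (y : Fin k)
    (S : Finset (Fin k)) (hScard : S.card = m)
    (hStop : ∀ i ∈ S, ∀ j ∉ S, (∑ l, W i l * x l) ≥ (∑ l, W j l * x l)) :
    max 0 (1 - (∑ l, W y l * x l) + (1 / (m : ℝ)) * ∑ i ∈ S, ∑ l, W i l * x l)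
      ≥ (if y ∉ S then (1 : ℝ) else 0) := by
  split_ifs with hy
  · exact le_max_left _ _
  · have hm0 : (0:ℝ) < (m:ℝ) := by exact_mod_cast hm1
    have hsum : (m:ℝ) * (∑ l, W y l * x l) ≤ ∑ i ∈ S, ∑ l, W i l * x l := by
      calc (m:ℝ) * (∑ l, W y l * x l)
          = ∑ i ∈ S, (∑ l, W y l * x l) := by
            rw [Finset.sum_const, hScard, nsmul_eq_mul]
        _ ≤ ∑ i ∈ S, ∑ l, W i l * x l :=
            Finset.sum_le_sum fun i hi => hStop i hi y hy
    have h1 : (∑ l, W y l * x l) ≤ (1 / (m:ℝ)) * ∑ i ∈ S, ∑ l, W i l * x l := by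
      rw [div_mul_eq_mul_div, le_div_iff₀ hm0, mul_comm]
      simpa using hsum
    have : (1:ℝ) ≤ 1 - (∑ l, W y l * x l) + (1 / (m:ℝ)) * ∑ i ∈ S, ∑ l, W i l * x l := by
      linarith
    exact le_trans this (le_max_right _ _)
end

section
/- Let k ≥ 2, d ≥ 1 and 1 ≤ m < k be integers. Let V ∈ ℝ^{k×d}, x ∈ ℝ^d, y ∈ {1,…,k}. Let S_V be a top-m set for (V,x) and let S ⊆ {1,…,k} be an arbitrary set of size m. Then max(0, 1 − (Vx)_y + (1/m)·∑_{i∈S_V}(Vx)_i) ≥ 𝟙{y ∉ S} − ((Vx)_y − (1/m)·∑_{i∈S}(Vx)_i). -/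
/-- For any matrix `V`, its own top-m set `S_V`, and an arbitrary
set `S` of size `m`,
`max(0, 1 − (Vx)_y + (1/m)·∑_{i∈S_V}(Vx)_i) ≥ 𝟙{y ∉ S} − ((Vx)_y − (1/m)·∑_{i∈S}(Vx)_i)`. -/
theorem avg_hinge_loss_comparator_bound
    (k d m : ℕ) (hk : 2 ≤ k) (hd : 1 ≤ d) (hm1 : 1 ≤ m) (hmk : m < k)
    (V : Matrix (Fin k) (Fin d) ℝ) (x : Fin d → ℝ) (y : Fin k)
    (SV : Finset (Fin k)) (hSVcard : SV.card = m)
    (hSVtop : ∀ i ∈ SV, ∀ j ∉ SV, (∑ l, V i l * x l) ≥ (∑ l, V j l * x l))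
    (S : Finset (Fin k)) (hScard : S.card = m) :
    max 0 (1 - (∑ l, V y l * x l) + (1 / (m : ℝ)) * ∑ i ∈ SV, ∑ l, V i l * x l)
      ≥ (if y ∉ S then (1 : ℝ) else 0)
        - ((∑ l, V y l * x l) - (1 / (m : ℝ)) * ∑ i ∈ S, ∑ l, V i l * x l) := by
  set f : Fin k → ℝ := fun i => ∑ l, V i l * x l with hf
  -- Step 1: ∑_{i∈S} f i ≤ ∑_{i∈SV} f i
  have hcard : (S \ SV).card = (SV \ S).card := by
    have h1 := Finset.card_sdiff_add_card_inter S SV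
    have h2 := Finset.card_sdiff_add_card_inter SV S
    rw [Finset.inter_comm] at h2
    omega
  have hsum : ∑ i ∈ S, f i ≤ ∑ i ∈ SV, f i := by
    have e : (S \ SV : Finset (Fin k)) ≃ (SV \ S : Finset (Fin k)) :=
      Finset.equivOfCardEq (by simpa using hcard)
    have key : ∑ i ∈ S \ SV, f i ≤ ∑ i ∈ SV \ S, f i := by
      rw [← Finset.sum_attach (S \ SV) f, ← Finset.sum_attach (SV \ S) f,
        Finset.attach_eq_univ, Finset.attach_eq_univ, ← e.sum_comp (fun b => f b)]
      refine Finset.sum_le_sum fun a _ => ?_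
      have hb : (e a : Fin k) ∈ SV := (Finset.mem_sdiff.mp (e a).2).1
      have ha : (a : Fin k) ∉ SV := (Finset.mem_sdiff.mp a.2).2
      exact hSVtop _ hb _ ha
    have hS := Finset.sum_inter_add_sum_sdiff S SV f
    have hSV := Finset.sum_inter_add_sum_sdiff SV S f
    rw [Finset.inter_comm] at hSV
    linarith
  have hm0 : (0 : ℝ) < m := by exact_mod_cast hm1
  have hmono : (1 / (m : ℝ)) * ∑ i ∈ S, f i ≤ (1 / (m : ℝ)) * ∑ i ∈ SV, f i := by
    apply mul_le_mul_of_nonneg_left hsum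
    positivity
  have hind : (if y ∉ S then (1 : ℝ) else 0) ≤ 1 := by split <;> norm_num
  calc (if y ∉ S then (1 : ℝ) else 0) - (f y - (1 / (m : ℝ)) * ∑ i ∈ S, f i)
      ≤ 1 - f y + (1 / (m : ℝ)) * ∑ i ∈ SV, f i := by linarith
    _ ≤ max 0 (1 - f y + (1 / (m : ℝ)) * ∑ i ∈ SV, f i) := le_max_right _ _
end

section
/- Let k ≥ 2, d ≥ 1 and 1 < m < k be integers, and set τ₁ = m·Perm(k−2, m−1) and τ₂ = (m−1)/(k−m). Let Z be any real-valued function on the set of superarms with Z(A) ≠ 0 for every superarm A and ∑_A Z(A) = 1. Fix x ∈ ℝ^d, y ∈ {1,…,k}, and a set S ⊆ {1,…,k} with |S| = m. For each superarm A define the matrix Ũ(A) ∈ ℝ^{k×d} by Ũ(A)_{r,j} = x_j·( 𝟙{y ∈ A}·𝟙{r ∈ A}/(Z(A)·τ₁) − 𝟙{r ∈ S}/m − τ₂ ). Then for every r ∈ {1,…,k} and j ∈ {1,…,d}, ∑_A Z(A)·Ũ(A)_{r,j} = x_j·( 𝟙{r = y} − 𝟙{r ∈ S}/m ); that is, the Z-expectation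 of Ũ equals the full-information update matrix U with U_{r,j} = x_j·(𝟙{r = y} − 𝟙{r ∈ S}/m). -/
/-!
Importance weighting cancels `Z`: the `Z`-expectation of `Ũ(A)_{r,j}` is
`x_j (N / τ₁ - 𝟙{r ∈ S} / m - τ₂)`, where `N` is the number of superarms containing both `y`
and `r`. Relabelling `{1,…,k}` by a transposition shows that these counts depend only on whether
`r = y`, and double counting pairs (superarm, element of it) then gives
`N = m·Perm(k-1, m-1)` if `r = y` and `N = m(m-1)·Perm(k-2, m-2)` otherwise.
Hence `N / τ₁` equals `1 + τ₂`, resp. `τ₂`.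
-/

open Finset

namespace Function.Embedding

variable {α β : Type*}

lemma exists_trans_perm_apply_eq_iff (f : α ↪ β) (σ : Equiv.Perm β) (b : β) :
    (∃ a, f.trans σ.toEmbedding a = b) ↔ ∃ a, f a = σ.symm b := by
  simp [Equiv.eq_symm_apply]

variable [Fintype α] [Fintype β]

lemma card_filter_trans_perm (σ : Equiv.Perm β) (p : (α ↪ β) → Prop) [DecidablePred p] :
    #{f : α ↪ β | p (f.trans σ.toEmbedding)} = #{f | p f} :=
  card_equiv (Equiv.embeddingCongr (Equiv.refl α) σ) fun f => by
    simp only [mem_filter, mem_univ, true_and]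
    rfl

variable [DecidableEq β]

lemma card_exists_apply_eq_eq (b b' : β) :
    #{f : α ↪ β | ∃ a, f a = b} = #{f : α ↪ β | ∃ a, f a = b'} := by
  rw [← card_filter_trans_perm (Equiv.swap b b')]
  simp only [exists_trans_perm_apply_eq_iff, Equiv.symm_swap, Equiv.swap_apply_left]

lemma card_exists_apply_eq_and_eq_eq {b b₁ b₂ : β} (h₁ : b₁ ≠ b) (h₂ : b₂ ≠ b) :
    #{f : α ↪ β | (∃ a, f a = b) ∧ ∃ a, f a = b₁} =
      #{f : α ↪ β | (∃ a, f a = b) ∧ ∃ a, f a = b₂} := by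
  rw [← card_filter_trans_perm (Equiv.swap b₁ b₂)]
  simp only [exists_trans_perm_apply_eq_iff, Equiv.symm_swap, Equiv.swap_apply_left,
    Equiv.swap_apply_of_ne_of_ne h₁.symm h₂.symm]

lemma filter_exists_apply_eq (f : α ↪ β) : ({b | ∃ a, f a = b} : Finset β) = univ.map f := by
  ext; simp

lemma card_mul_card_exists_apply_eq (b : β) :
    Fintype.card β * #{f : α ↪ β | ∃ a, f a = b} = Fintype.card α * Fintype.card (α ↪ β) :=
  calc Fintype.card β * #{f : α ↪ β | ∃ a, f a = b}
      = ∑ b' : β, #{f : α ↪ β | ∃ a, f a = b'} := by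
        rw [sum_congr rfl fun b' _ => card_exists_apply_eq_eq b' b, sum_const, card_univ,
          smul_eq_mul]
    _ = ∑ f : α ↪ β, #{b' | ∃ a, f a = b'} := by
        simp only [card_filter]; exact sum_comm
    _ = Fintype.card α * Fintype.card (α ↪ β) := by
        simp only [filter_exists_apply_eq, card_map, card_univ, sum_const, smul_eq_mul, mul_comm]

lemma card_sub_one_mul_card_exists_apply_eq_and_eq {b b' : β} (hb : b' ≠ b) :
    (Fintype.card β - 1) * #{f : α ↪ β | (∃ a, f a = b) ∧ ∃ a, f a = b'} =
      (Fintype.card α - 1) * #{f : α ↪ β | ∃ a, f a = b} :=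
  calc (Fintype.card β - 1) * #{f : α ↪ β | (∃ a, f a = b) ∧ ∃ a, f a = b'}
      = ∑ b'' ∈ univ.erase b, #{f : α ↪ β | (∃ a, f a = b) ∧ ∃ a, f a = b''} := by
        rw [sum_congr rfl fun b'' hb'' => card_exists_apply_eq_and_eq_eq (ne_of_mem_erase hb'') hb,
          sum_const, card_erase_of_mem (mem_univ b), card_univ, smul_eq_mul]
    _ = ∑ f : α ↪ β, if ∃ a, f a = b then #((univ.map f).erase b) else 0 := by
        simp only [card_filter]
        rw [sum_comm]
        refine sum_congr rfl fun f _ => ?_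
        split_ifs with hf
        · simp only [hf, true_and]
          rw [← card_filter, filter_erase, filter_exists_apply_eq]
        · simp [hf]
    _ = (Fintype.card α - 1) * #{f : α ↪ β | ∃ a, f a = b} := by
        rw [card_filter, mul_sum]
        refine sum_congr rfl fun f _ => ?_
        split_ifs with hf
        · rw [card_erase_of_mem (by simpa using hf), card_map, card_univ, mul_one]
        · rw [mul_zero]

lemma card_exists_apply_eq_eq_mul_descFactorial (b : β) :
    #{f : α ↪ β | ∃ a, f a = b} =
      Fintype.card α * (Fintype.card β - 1).descFactorial (Fintype.card α - 1) := by
  have h := card_mul_card_exists_apply_eq (α := α) b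
  obtain ⟨n, hn⟩ : ∃ n, Fintype.card β = n + 1 :=
    Nat.exists_eq_add_one.mpr (Fintype.card_pos_iff.mpr ⟨b⟩)
  rw [Fintype.card_embedding_eq, hn] at h
  rw [hn, Nat.add_sub_cancel]
  refine Nat.eq_of_mul_eq_mul_left (show 0 < n + 1 by omega) (h.trans ?_)
  rcases Fintype.card α with _ | a
  · simp
  · rw [Nat.succ_descFactorial_succ, Nat.add_sub_cancel]
    ring

lemma card_exists_apply_eq_and_eq_eq_mul_descFactorial {b b' : β} (hb : b' ≠ b) :
    #{f : α ↪ β | (∃ a, f a = b) ∧ ∃ a, f a = b'} =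
      Fintype.card α * (Fintype.card α - 1) *
        (Fintype.card β - 2).descFactorial (Fintype.card α - 2) := by
  have h := card_sub_one_mul_card_exists_apply_eq_and_eq (α := α) hb
  obtain ⟨n, hn⟩ : ∃ n, Fintype.card β = n + 2 :=
    Nat.exists_eq_add_of_le' (Fintype.one_lt_card_iff.mpr ⟨b', b, hb⟩)
  rw [card_exists_apply_eq_eq_mul_descFactorial, hn] at h
  simp only [Nat.reduceSubDiff] at h
  rw [hn, Nat.add_sub_cancel]
  refine Nat.eq_of_mul_eq_mul_left (show 0 < n + 1 by omega) (h.trans ?_)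
  rcases Fintype.card α with _ | _ | a
  · simp
  · simp
  · simp only [Nat.add_sub_cancel, Nat.reduceSubDiff, Nat.succ_descFactorial_succ]
    ring

end Function.Embedding

open Function.Embedding

-- Over `Fin m` the existential is decided by `Nat.decidableExistsFin`, not by the `Fintype`
-- instance of the general lemmas, hence `convert`.
lemma card_fin_embedding_exists_apply_eq_and_eq {m k : ℕ} (y r : Fin k) :
    #{A : Fin m ↪ Fin k | (∃ i, A i = y) ∧ ∃ i, A i = r} =
      if r = y then m * (k - 1).descFactorial (m - 1)
      else m * (m - 1) * (k - 2).descFactorial (m - 2) := by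
  split_ifs with hry
  · subst hry
    simp only [and_self]
    convert card_exists_apply_eq_eq_mul_descFactorial (α := Fin m) r using 3 <;> simp
  · convert card_exists_apply_eq_and_eq_eq_mul_descFactorial (α := Fin m) hry using 3 <;> simp

lemma card_fin_embedding_exists_apply_eq_and_eq_div {m k : ℕ} (hm : 1 < m) (hmk : m < k)
    (y r : Fin k) :
    (#{A : Fin m ↪ Fin k | (∃ i, A i = y) ∧ ∃ i, A i = r} : ℝ) /
        (m * (k - 2).descFactorial (m - 1)) =
      (if r = y then 1 else 0) + ((m : ℝ) - 1) / ((k : ℝ) - m) := by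
  rw [card_fin_embedding_exists_apply_eq_and_eq]
  obtain ⟨m, rfl⟩ : ∃ m', m = m' + 2 := ⟨m - 2, by omega⟩
  obtain ⟨k, rfl⟩ : ∃ k', k = k' + 2 := ⟨k - 2, by omega⟩
  have hD : (k.descFactorial m : ℝ) ≠ 0 := by
    exact_mod_cast (Nat.descFactorial_pos.mpr (by omega)).ne'
  have hkm : (k : ℝ) - m ≠ 0 := by
    have : (m : ℝ) < k := by exact_mod_cast (by omega : m < k)
    linarith
  simp only [Nat.reduceSubDiff, Nat.add_sub_cancel, Nat.succ_descFactorial_succ,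
    Nat.descFactorial_succ]
  push_cast [Nat.cast_sub (by omega : m ≤ k)]
  rw [show (k : ℝ) + 2 - (m + 2) = k - m by ring]
  split_ifs <;> field_simp <;> ring

lemma sum_mul_div_mul_sub {ι K : Type*} [Fintype ι] [Field K] {w : ι → K} (hw : ∀ i, w i ≠ 0)
    (hsum : ∑ i, w i = 1) (P : ι → K) (t u : K) :
    ∑ i, w i * (P i / (w i * t) - u) = (∑ i, P i) / t - u := by
  have h (i : ι) : w i * (P i / (w i * t) - u) = P i / t - w i * u := by
    rw [mul_sub, ← mul_div_assoc, mul_div_mul_left _ _ (hw i)]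
  rw [sum_congr rfl fun i _ => h i, sum_sub_distrib, sum_div, ← sum_mul, hsum, one_mul]

theorem dbf_update_unbiased_general
    (k d m : ℕ) (hm1 : 1 < m) (hmk : m < k)
    (τ₁ τ₂ : ℝ)
    (hτ₁ : τ₁ = m * Nat.descFactorial (k - 2) (m - 1))
    (hτ₂ : τ₂ = ((m : ℝ) - 1) / ((k : ℝ) - m))
    (Z : (Fin m ↪ Fin k) → ℝ)
    (hZne : ∀ A, Z A ≠ 0) (hZsum : ∑ A, Z A = 1)
    (x : Fin d → ℝ) (y : Fin k)
    (S : Finset (Fin k)) :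
    ∀ (r : Fin k) (j : Fin d),
      ∑ A : Fin m ↪ Fin k,
        Z A * (x j *
          ((if ∃ i, A i = y then (1 : ℝ) else 0)
              * (if ∃ i, A i = r then (1 : ℝ) else 0) / (Z A * τ₁)
            - (if r ∈ S then (1 : ℝ) else 0) / m - τ₂))
      = x j * ((if r = y then (1 : ℝ) else 0)
          - (if r ∈ S then (1 : ℝ) else 0) / m) := by
  intro r j
  simp_rw [mul_left_comm (Z _) (x j), sub_sub, ← mul_sum]
  rw [sum_mul_div_mul_sub hZne hZsum]
  simp only [ite_zero_mul_ite_zero, one_mul, sum_boole]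
  rw [hτ₁, card_fin_embedding_exists_apply_eq_and_eq_div hm1 hmk, hτ₂]
  ring

/-- Unbiasedness of the MC-DBF update matrix. With
`τ₁ = m·Perm(k−2, m−1)`, `τ₂ = (m−1)/(k−m)`, and any probability weights `Z`
on superarms (nonzero, summing to 1), the Z-expectation of
`Ũ(A)_{r,j} = x_j·(𝟙{y∈A}·𝟙{r∈A}/(Z(A)·τ₁) − 𝟙{r∈S}/m − τ₂)` equals the
full-information update `U_{r,j} = x_j·(𝟙{r = y} − 𝟙{r ∈ S}/m)`. -/
theorem dbf_update_unbiased
    (k d m : ℕ) (hk : 2 ≤ k) (hd : 1 ≤ d) (hm1 : 1 < m) (hmk : m < k)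
    (τ₁ τ₂ : ℝ)
    (hτ₁ : τ₁ = m * Nat.descFactorial (k - 2) (m - 1))
    (hτ₂ : τ₂ = ((m : ℝ) - 1) / ((k : ℝ) - m))
    (Z : (Fin m ↪ Fin k) → ℝ)
    (hZne : ∀ A, Z A ≠ 0) (hZsum : ∑ A, Z A = 1)
    (x : Fin d → ℝ) (y : Fin k)
    (S : Finset (Fin k)) (hScard : S.card = m) :
    ∀ (r : Fin k) (j : Fin d),
      ∑ A : Fin m ↪ Fin k,
        Z A * (x j *
          ((if ∃ i, A i = y then (1 : ℝ) else 0)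
              * (if ∃ i, A i = r then (1 : ℝ) else 0) / (Z A * τ₁)
            - (if r ∈ S then (1 : ℝ) else 0) / m - τ₂))
      = x j * ((if r = y then (1 : ℝ) else 0)
          - (if r ∈ S then (1 : ℝ) else 0) / m) :=
  dbf_update_unbiased_general k d m hm1 hmk τ₁ τ₂ hτ₁ hτ₂ Z hZne hZsum x y S
end

section
/- Let M, λ₁, λ₂, D, T, R be nonnegative real numbers. If M − √(λ₁·D·M/2) − ( R + √((λ₂+1)·D·T/2) ) ≤ 0, then M ≤ R + √(λ₁·D·R/2) + 3·max( λ₁·D/2, √((λ₂+1)·D·T/2) ). -/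
/-- If `M − √(lam₁·D·M/2) − (R + √((lam₂+1)·D·T/2)) ≤ 0` for
nonnegative reals, then `M ≤ R + √(lam₁·D·R/2) + 3·max(lam₁·D/2, √((lam₂+1)·D·T/2))`. -/
theorem quadratic_mistake_bound
    (M lam₁ lam₂ D T R : ℝ)
    (hM : 0 ≤ M) (hlam₁ : 0 ≤ lam₁) (hlam₂ : 0 ≤ lam₂) (hD : 0 ≤ D) (hT : 0 ≤ T)
    (hR : 0 ≤ R)
    (h : M - Real.sqrt (lam₁ * D * M / 2)
          - (R + Real.sqrt ((lam₂ + 1) * D * T / 2)) ≤ 0) :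
    M ≤ R + Real.sqrt (lam₁ * D * R / 2)
        + 3 * max (lam₁ * D / 2) (Real.sqrt ((lam₂ + 1) * D * T / 2)) := by
  set a := lam₁ * D / 2 with ha
  have haa : 0 ≤ a := by positivity
  set b := Real.sqrt ((lam₂ + 1) * D * T / 2) with hbdef
  have hb : 0 ≤ b := Real.sqrt_nonneg _
  set sR := Real.sqrt (lam₁ * D * R / 2) with hsRdef
  have hsR : 0 ≤ sR := Real.sqrt_nonneg _
  have hsR2 : sR ^ 2 = a * R := by
    rw [hsRdef, Real.sq_sqrt (by positivity)]; ring
  set sA := Real.sqrt (lam₁ * D * M / 2) with hsAdef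
  have hsA : 0 ≤ sA := Real.sqrt_nonneg _
  have hsA2 : sA ^ 2 = a * M := by
    rw [hsAdef, Real.sq_sqrt (by positivity)]; ring
  set m := max a b with hm
  have hma : a ≤ m := le_max_left _ _
  have hmb : b ≤ m := le_max_right _ _
  have hm0 : 0 ≤ m := le_trans haa hma
  by_cases hy : M - R - b ≤ 0
  · nlinarith
  · push_neg at hy
    have hsAy : M - R - b ≤ sA := by linarith
    have key : (M - R - b) ^ 2 ≤ a * M := by
      nlinarith [sq_nonneg sA]
    nlinarith [sq_nonneg (M - R - b - sR - m), sq_nonneg (sR + m),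
      mul_nonneg hsR hm0, mul_nonneg hm0 hm0, sq_nonneg (M - R - b - m)]
end

section
/- Let M, λ₁, λ₂, D, T, R be nonnegative real numbers. If M ≤ R + √( D·(λ₁·M + (λ₂+1)·T)/2 ), then M ≤ R + √(λ₁·D·R/2) + 3·max( λ₁·D/2, √((λ₂+1)·D·T/2) ). (This is the deterministic inequality at the heart of the mistake-bound Theorem for MC-DBF, obtained by comparing the lower bound E⟨W*,W^{T+1}⟩ ≥ E[M] − R_T with the upper bound E⟨W*,W^{T+1}⟩ ≤ √(D·E‖W^{T+1}‖²_F/2) ≤ √(D(λ₁E[M]+(λ₂+1)T)/2).) -/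
/-- If `M ≤ R + √(D·(lam₁·M + (lam₂+1)·T)/2)` for nonnegative reals,
then `M ≤ R + √(lam₁·D·R/2) + 3·max(lam₁·D/2, √((lam₂+1)·D·T/2))`. -/
theorem mistake_bound_from_self_bound
    (M lam₁ lam₂ D T R : ℝ)
    (hM : 0 ≤ M) (hlam₁ : 0 ≤ lam₁) (hlam₂ : 0 ≤ lam₂) (hD : 0 ≤ D) (hT : 0 ≤ T)
    (hR : 0 ≤ R)
    (h : M ≤ R + Real.sqrt (D * (lam₁ * M + (lam₂ + 1) * T) / 2)) :
    M ≤ R + Real.sqrt (lam₁ * D * R / 2)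
        + 3 * max (lam₁ * D / 2) (Real.sqrt ((lam₂ + 1) * D * T / 2)) := by
  set a : ℝ := lam₁ * D / 2 with ha
  have ha0 : 0 ≤ a := by positivity
  set s : ℝ := Real.sqrt (D * (lam₁ * M + (lam₂ + 1) * T) / 2) with hsdef
  set t : ℝ := Real.sqrt (lam₁ * D * R / 2) with htdef
  set b : ℝ := Real.sqrt ((lam₂ + 1) * D * T / 2) with hbdef
  have hs0 : 0 ≤ s := Real.sqrt_nonneg _
  have ht0 : 0 ≤ t := Real.sqrt_nonneg _
  have hb0 : 0 ≤ b := Real.sqrt_nonneg _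
  have hs2 : s ^ 2 = a * M + b ^ 2 := by
    rw [hsdef, hbdef, Real.sq_sqrt (by positivity), Real.sq_sqrt (by positivity)]
    ring
  have ht2 : t ^ 2 = a * R := by
    rw [htdef, Real.sq_sqrt (by positivity)]; ring
  set m : ℝ := max a b with hm
  have ham : a ≤ m := le_max_left _ _
  have hbm : b ≤ m := le_max_right _ _
  have hm0 : 0 ≤ m := le_trans ha0 ham
  by_contra hcon
  push_neg at hcon
  have hx : R + t + 3 * m < M := by linarith
  have hxpos : 0 < M - R := by linarith
  have hsq : (M - R) ^ 2 ≤ s ^ 2 := by nlinarith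
  nlinarith [mul_le_mul_of_nonneg_right ham hM, mul_le_mul_of_nonneg_right hbm hb0,
    mul_le_mul_of_nonneg_left hx.le hm0, mul_le_mul_of_nonneg_left hx.le ht0,
    mul_pos hxpos hxpos, sq_nonneg (M - R - t - 3*m)]
end
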